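/- Let g : ℝ → ℝ be twice continuously differentiable with g, g', g'' ∈ L²(ℝ), and with g(x) → 0 and g'(x) → 0 as |x| → ∞. Then sup_{x∈ℝ} |g'(x)| ≤ √2 · ‖g‖_{L²}^{1/4} · ‖g''‖_{L²}^{3/4}. -/

import Mathlib

/-!
Write `f = g'`. Since `f` and `f'` are in `L²`, `(f²)' = 2 f f'` is integrable, so `f²` tends to `0`
at `-∞` and `f(x)² = ∫_{-∞}^x 2 f f' ≤ 2 ‖f‖ ‖f'‖` by Cauchy–Schwarz. Integrating by parts,
`‖g'‖² = -∫ g g'' ≤ ‖g‖ ‖g''‖` (the boundary terms vanish because `g g'` and its derivative are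
integrable). Combining, `g'(x)⁴ ≤ 4 ‖g'‖² ‖g''‖² ≤ 4 ‖g‖ ‖g''‖³`.
-/

open MeasureTheory Filter Set intervalIntegral

/-- The `L²(ℝ)` norm `(∫ℝ |g(x)|² dx)^(1/2)`. -/
noncomputable def L2Norm (g : ℝ → ℝ) : ℝ := (∫ x : ℝ, (g x) ^ 2) ^ ((1 : ℝ) / 2)

/-- `g ∈ L²(ℝ)`, i.e. `∫ℝ |g(x)|² dx < ∞`. -/
def MemL2 (g : ℝ → ℝ) : Prop := MeasureTheory.Integrable fun x => (g x) ^ 2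

open Topology

lemma L2Norm_nonneg (u : ℝ → ℝ) : 0 ≤ L2Norm u :=
  Real.rpow_nonneg (integral_nonneg fun _ => sq_nonneg _) _

lemma L2Norm_sq (u : ℝ → ℝ) : L2Norm u ^ 2 = ∫ x, u x ^ 2 := by
  rw [L2Norm, ← Real.sqrt_eq_rpow, Real.sq_sqrt (integral_nonneg fun _ => sq_nonneg _)]

lemma MemL2.memLp_two {u : ℝ → ℝ} (hu : MemL2 u) (hmeas : AEStronglyMeasurable u) :
    MemLp u 2 :=
  (memLp_two_iff_integrable_sq hmeas).2 hu

lemma integral_abs_mul_le_L2Norm_mul {u v : ℝ → ℝ} (hu : MemLp u 2) (hv : MemLp v 2) :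
    ∫ x, |u x * v x| ≤ L2Norm u * L2Norm v := by
  have hu' : MemLp u (ENNReal.ofReal 2) := by simpa using hu
  have hv' : MemLp v (ENNReal.ofReal 2) := by simpa using hv
  simpa [abs_mul, L2Norm] using integral_mul_norm_le_Lp_mul_Lq Real.HolderConjugate.two_two hu' hv'

lemma sq_le_two_mul_L2Norm_mul_L2Norm_deriv {f : ℝ → ℝ} (hf : Differentiable ℝ f)
    (hf2 : MemLp f 2) (hf'2 : MemLp (deriv f) 2) (x : ℝ) :
    f x ^ 2 ≤ 2 * (L2Norm f * L2Norm (deriv f)) := by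
  have hderiv : ∀ t, HasDerivAt (fun t => f t ^ 2) (2 * (f t * deriv f t)) t := fun t => by
    simpa [mul_assoc] using (hf t).hasDerivAt.fun_pow 2
  have hint : Integrable fun t => 2 * (f t * deriv f t) := (hf2.integrable_mul hf'2).const_mul 2
  have hbot : Tendsto (fun t => f t ^ 2) atBot (𝓝 0) :=
    tendsto_zero_of_hasDerivAt_of_integrableOn_Iic (a := x) (fun t _ => hderiv t)
      hint.integrableOn hf2.integrable_sq.integrableOn
  calc f x ^ 2 = ∫ t in Iic x, 2 * (f t * deriv f t) := by
        rw [integral_Iic_of_hasDerivAt_of_tendsto' (fun t _ => hderiv t) hint.integrableOn hbot,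
          sub_zero]
    _ ≤ ∫ t, |2 * (f t * deriv f t)| :=
        (setIntegral_mono hint.integrableOn hint.abs.integrableOn fun t => le_abs_self _).trans
          (setIntegral_le_integral hint.abs (ae_of_all _ fun t => abs_nonneg _))
    _ = 2 * ∫ t, |f t * deriv f t| := by simp [abs_mul, MeasureTheory.integral_const_mul]
    _ ≤ 2 * (L2Norm f * L2Norm (deriv f)) := by
        gcongr; exact integral_abs_mul_le_L2Norm_mul hf2 hf'2

lemma L2Norm_deriv_sq_le {g : ℝ → ℝ} (hg : Differentiable ℝ g) (hg' : Differentiable ℝ (deriv g))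
    (hg2 : MemLp g 2) (hg'2 : MemLp (deriv g) 2) (hg''2 : MemLp (deriv (deriv g)) 2) :
    L2Norm (deriv g) ^ 2 ≤ L2Norm g * L2Norm (deriv (deriv g)) := by
  have hparts : ∫ x, g x * deriv (deriv g) x = -∫ x, deriv g x * deriv g x :=
    integral_mul_deriv_eq_deriv_mul_of_integrable (fun x _ => (hg x).hasDerivAt)
      (fun x _ => (hg' x).hasDerivAt) (hg2.integrable_mul hg''2) (hg'2.integrable_mul hg'2)
      (hg2.integrable_mul hg'2)
  calc L2Norm (deriv g) ^ 2 = -∫ x, g x * deriv (deriv g) x := by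
        rw [L2Norm_sq, hparts, neg_neg]; simp only [sq]
    _ ≤ ∫ x, |g x * deriv (deriv g) x| := by
        rw [← MeasureTheory.integral_neg]
        exact integral_mono (hg2.integrable_mul hg''2).neg (hg2.integrable_mul hg''2).abs
          fun x => neg_le_abs _
    _ ≤ L2Norm g * L2Norm (deriv (deriv g)) := integral_abs_mul_le_L2Norm_mul hg2 hg''2

lemma le_sqrt_two_mul_rpow_mul_rpow_of_sq_le {y a b c : ℝ} (hy : 0 ≤ y) (ha : 0 ≤ a) (hc : 0 ≤ c)
    (hyb : y ^ 2 ≤ 2 * (b * c)) (hba : b ^ 2 ≤ a * c) :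
    y ≤ Real.sqrt 2 * a ^ ((1:ℝ)/4) * c ^ ((3:ℝ)/4) := by
  have hrhs : (Real.sqrt 2 * a ^ ((1:ℝ)/4) * c ^ ((3:ℝ)/4)) ^ 8 = 16 * a ^ 2 * c ^ 6 := by
    have hsqrt : Real.sqrt 2 ^ 8 = 16 := by
      rw [show 8 = 2 * 4 by rfl, pow_mul, Real.sq_sqrt zero_le_two]; norm_num
    rw [mul_pow, mul_pow, hsqrt, ← Real.rpow_natCast, ← Real.rpow_natCast (c ^ _),
      ← Real.rpow_mul ha, ← Real.rpow_mul hc]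
    norm_num
  rw [← pow_le_pow_iff_left₀ hy (by positivity) (by norm_num : 8 ≠ 0), hrhs]
  calc y ^ 8 = (y ^ 2) ^ 4 := by ring
    _ ≤ (2 * (b * c)) ^ 4 := pow_le_pow_left₀ (sq_nonneg y) hyb 4
    _ = 16 * (b ^ 2) ^ 2 * c ^ 4 := by ring
    _ ≤ 16 * (a * c) ^ 2 * c ^ 4 := by gcongr
    _ = 16 * a ^ 2 * c ^ 6 := by ring

theorem sobolev_sup_bound_deriv_general
    (g : ℝ → ℝ) (hg : ContDiff ℝ 2 g)
    (hL2 : MemL2 g) (hL2' : MemL2 (deriv g)) (hL2'' : MemL2 (iteratedDeriv 2 g)) :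
    ∀ x : ℝ,
      |deriv g x|
        ≤ Real.sqrt 2 * L2Norm g ^ ((1:ℝ)/4) * L2Norm (iteratedDeriv 2 g) ^ ((3:ℝ)/4) := by
  intro x
  have hg₂ : iteratedDeriv 2 g = deriv (deriv g) := by simp [iteratedDeriv_succ]
  rw [hg₂] at hL2'' ⊢
  have hg' : Differentiable ℝ (deriv g) := by
    simpa using hg.differentiable_iteratedDeriv 1 (by norm_num)
  have hg2 := hL2.memLp_two hg.continuous.aestronglyMeasurable
  have hg'2 := hL2'.memLp_two (measurable_deriv g).aestronglyMeasurable
  have hg''2 := hL2''.memLp_two (measurable_deriv (deriv g)).aestronglyMeasurable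
  refine le_sqrt_two_mul_rpow_mul_rpow_of_sq_le (abs_nonneg _) (L2Norm_nonneg g)
    (L2Norm_nonneg _) ?_ (L2Norm_deriv_sq_le (hg.differentiable two_ne_zero) hg' hg2 hg'2 hg''2)
  rw [sq_abs]
  exact sq_le_two_mul_L2Norm_mul_L2Norm_deriv hg' hg'2 hg''2 x

/-- If `g ∈ C²` with `g, g', g'' ∈ L²(ℝ)` and `g(x), g'(x) → 0` as
`|x| → ∞`, then `sup_x |g'(x)| ≤ √2 ‖g‖^{1/4} ‖g''‖^{3/4}`. -/
theorem sobolev_sup_bound_deriv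
    (g : ℝ → ℝ) (hg : ContDiff ℝ 2 g)
    (hL2 : MemL2 g) (hL2' : MemL2 (deriv g)) (hL2'' : MemL2 (iteratedDeriv 2 g))
    (hdecay : Tendsto g (cocompact ℝ) (nhds 0))
    (hdecay' : Tendsto (deriv g) (cocompact ℝ) (nhds 0)) :
    ∀ x : ℝ,
      |deriv g x|
        ≤ Real.sqrt 2 * L2Norm g ^ ((1:ℝ)/4) * L2Norm (iteratedDeriv 2 g) ^ ((3:ℝ)/4) :=
  sobolev_sup_bound_deriv_general g hg hL2 hL2' hL2''
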